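/- Let T be a complete satisfiable L-theory. Suppose there exists a set Φ = {φ_i(x; ȳ_i) : i ∈ I} of partitioned L-formulas (each with x a single variable) such that: (a) for every model M ⊨ T, the family 𝒜_Φ(M) = {φ_i(M; b̄) : i ∈ I, b̄ ∈ M^{lg(ȳ_i)}} of subsets of M has independence dimension ≤ 1 with respect to M; and (b) for every partitioned L-formula ψ(x; ȳ), every model M ⊨ T, and every b̄ ∈ M^{lg(ȳ)}, the set ψ(M; b̄) lies in the Boolean algebra of subsets of M generated by 𝒜_Φ(M). Then every model of T is convexly orderable. -/

import Mathlib

/-! For a finite `s ⊆ M` and a point `p`, replace each set of `𝒜_Φ(M)` containing `p` by its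
complement. Independence dimension `≤ 1` survives this, and sets avoiding a common point with
independence dimension `≤ 1` form a laminar family; hence for some order every set of `𝒜_Φ(M)`
has a convex or co-convex trace on `s`. The order on `M` is an ultralimit of these orders over the
finite subsets. By compactness (in an ultrapower of `M`) each `ψ(x; ȳ)` ranges over finitely many
Boolean combinations of `Φ`-instances, and a Boolean combination of sets with at most two convex
pieces has a bounded number of pieces. Too many pieces are witnessed by finitely many alternating
points, which already alternate at some finite stage; so the bound survives the ultralimit. -/

open FirstOrder Language

/-- `S` is convex with respect to the strict order `r`. -/
def IsRConvex {X : Type*} (r : X → X → Prop) (S : Set X) : Prop :=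
  ∀ a b c : X, r a b → r b c → a ∈ S → c ∈ S → b ∈ S

/-- `S` is a union of at most `K` `r`-convex subsets of `X`. -/
def UnionOfAtMostConvex {X : Type*} (r : X → X → Prop) (K : ℕ) (S : Set X) : Prop :=
  ∃ C : Fin K → Set X, (∀ i, IsRConvex r (C i)) ∧ S = ⋃ i, C i

/-- `φ(M; b̄)`, the set defined in `M` by the partitioned formula `φ(x; ȳ)` with
parameters `b̄`. -/
def realizeSet (L : Language) (M : Type*) [L.Structure M] {m : ℕ}
    (φ : L.Formula (Unit ⊕ Fin m)) (b : Fin m → M) : Set M :=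
  {a : M | φ.Realize (Sum.elim (fun _ => a) b)}

/-- An `L`-structure `M` is convexly orderable if there is a linear order on `M` such
that every partitioned formula `φ(x; ȳ)` admits a uniform finite bound `K` such that
each `φ(M; b̄)` is a union of at most `K` convex sets. -/
def ConvexlyOrderable (L : Language) (M : Type*) [L.Structure M] : Prop :=
  ∃ r : M → M → Prop, IsStrictTotalOrder M r ∧
    ∀ (m : ℕ) (φ : L.Formula (Unit ⊕ Fin m)), ∃ K : ℕ,
      ∀ b : Fin m → M, UnionOfAtMostConvex r K (realizeSet L M φ b)


/-- A family of subsets of `X` has independence dimension `≤ 1` with respect to `X`. -/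
def IndepDimLEOne {X : Type*} (𝒜 : Set (Set X)) : Prop :=
  ∀ A ∈ 𝒜, ∀ B ∈ 𝒜, A ∩ B = ∅ ∨ A \ B = ∅ ∨ B \ A = ∅ ∨ (A ∪ B)ᶜ = ∅

/-- The Boolean algebra of subsets of `X` generated by a family `G`. -/
inductive GenBoolAlg {X : Type*} (G : Set (Set X)) : Set X → Prop
  | base {A : Set X} : A ∈ G → GenBoolAlg G A
  | compl {A : Set X} : GenBoolAlg G A → GenBoolAlg G Aᶜ
  | union {A B : Set X} : GenBoolAlg G A → GenBoolAlg G B → GenBoolAlg G (A ∪ B)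
  | inter {A B : Set X} : GenBoolAlg G A → GenBoolAlg G B → GenBoolAlg G (A ∩ B)


instance {α : Type*} (r : α → α → Prop) [IsStrictTotalOrder α r] (p : α → Prop) :
    IsStrictTotalOrder (Subtype p) (Subrel r p) := {}

section Convex

variable {X : Type*} {r : X → X → Prop}

theorem isRConvex_empty : IsRConvex r (∅ : Set X) := fun _ _ _ _ _ h _ => h.elim

theorem IsRConvex.inter {S T : Set X} (hS : IsRConvex r S) (hT : IsRConvex r T) :
    IsRConvex r (S ∩ T) := fun a b c hab hbc ha hc =>
  ⟨hS a b c hab hbc ha.1 hc.1, hT a b c hab hbc ha.2 hc.2⟩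

theorem IsRConvex.preimage {Y : Type*} {r' : Y → Y → Prop} {f : Y → X}
    (hf : ∀ a b, r' a b → r (f a) (f b)) {S : Set X} (hS : IsRConvex r S) :
    IsRConvex r' (f ⁻¹' S) := fun a b c hab hbc ha hc =>
  hS (f a) (f b) (f c) (hf a b hab) (hf b c hbc) ha hc

theorem UnionOfAtMostConvex.of_isRConvex {S : Set X} (h : IsRConvex r S) :
    UnionOfAtMostConvex r 1 S :=
  ⟨fun _ => S, fun _ => h, (Set.iUnion_const S).symm⟩

theorem unionOfAtMostConvex_empty (k : ℕ) : UnionOfAtMostConvex r k (∅ : Set X) :=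
  ⟨fun _ => ∅, fun _ => isRConvex_empty, by simp⟩

theorem UnionOfAtMostConvex.union {S T : Set X} {j k : ℕ} (hS : UnionOfAtMostConvex r j S)
    (hT : UnionOfAtMostConvex r k T) : UnionOfAtMostConvex r (j + k) (S ∪ T) := by
  obtain ⟨C, hC, rfl⟩ := hS
  obtain ⟨D, hD, rfl⟩ := hT
  refine ⟨Fin.append C D, Fin.addCases (by simpa using hC) (by simpa using hD), ?_⟩
  rw [← finSumFinEquiv.surjective.iUnion_comp, Set.iUnion_sum]
  simp

theorem UnionOfAtMostConvex.inter {S T : Set X} {j k : ℕ} (hS : UnionOfAtMostConvex r j S)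
    (hT : UnionOfAtMostConvex r k T) : UnionOfAtMostConvex r (j * k) (S ∩ T) := by
  obtain ⟨C, hC, rfl⟩ := hS
  obtain ⟨D, hD, rfl⟩ := hT
  refine ⟨fun i => C (finProdFinEquiv.symm i).1 ∩ D (finProdFinEquiv.symm i).2,
    fun i => (hC _).inter (hD _), ?_⟩
  rw [Set.iUnion_inter_iUnion, ← Set.iUnion_prod' (fun p => C p.1 ∩ D p.2),
    ← finProdFinEquiv.symm.surjective.iUnion_comp]

theorem UnionOfAtMostConvex.mono {S : Set X} {j k : ℕ} (h : UnionOfAtMostConvex r j S)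
    (hjk : j ≤ k) : UnionOfAtMostConvex r k S := by
  simpa [Nat.add_sub_cancel' hjk] using h.union (unionOfAtMostConvex_empty (r := r) (k - j))

end Convex

section Alternation

variable {X : Type*} {r : X → X → Prop}

def HasAlternation (r : X → X → Prop) (S : Set X) (k : ℕ) : Prop :=
  ∃ (a : Fin (k + 1) → X) (c : Fin k → X), (∀ i, a i ∈ S) ∧ (∀ i, c i ∉ S) ∧
    ∀ i, r (a i.castSucc) (c i) ∧ r (c i) (a i.succ)

variable [IsStrictTotalOrder X r] {S : Set X} {k : ℕ}

theorem UnionOfAtMostConvex.not_hasAlternation (h : UnionOfAtMostConvex r k S) :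
    ¬ HasAlternation r S k := by
  classical
  rintro ⟨a, c, haS, hcS, hac⟩
  obtain ⟨C, hC, rfl⟩ := h
  let := linearOrderOfSTO r
  have ha : StrictMono a := Fin.strictMono_iff_lt_succ.2 fun i => trans_of r (hac i).1 (hac i).2
  choose g hg using fun i => Set.mem_iUnion.1 (haS i)
  obtain ⟨i, j, hij, hgij⟩ := Fintype.exists_ne_map_eq_of_card_lt g (by simp)
  wlog hlt : i < j generalizing i j
  · exact this j i hij.symm hgij.symm (hij.lt_or_gt.resolve_left hlt)
  obtain ⟨i, rfl⟩ := Fin.exists_castSucc_eq.2 (Fin.ne_last_of_lt hlt)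
  have hcj : r (c i) (a j) :=
    lt_of_lt_of_le (hac i).2 (ha.monotone (Fin.castSucc_lt_iff_succ_le.1 hlt))
  exact hcS i (Set.mem_iUnion.2 ⟨_, hC _ _ _ _ (hac i).1 hcj (hg _) (hgij ▸ hg j)⟩)

theorem unionOfAtMostConvex_of_not_hasAlternation (h : ¬ HasAlternation r S k) :
    UnionOfAtMostConvex r k S := by
  induction k generalizing S with
  | zero =>
    have : S = ∅ := Set.eq_empty_of_forall_notMem fun x hx =>
      h ⟨fun _ => x, Fin.elim0, fun _ => hx, fun i => i.elim0, fun i => i.elim0⟩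
    exact this ▸ unionOfAtMostConvex_empty 0
  | succ k ih =>
    -- `G` is the part of `X` above the first gap of `S`; `S \ G` is the first convex piece.
    set G := {z | ∃ a ∈ S, ∃ c ∉ S, r a c ∧ r c z}
    have hG : ∀ x z, x ∈ G → r x z → z ∈ G := fun x z ⟨a, ha, c, hc, hac, hcx⟩ hxz =>
      ⟨a, ha, c, hc, hac, trans_of r hcx hxz⟩
    have hfirst : IsRConvex r (S \ G) := by
      rintro a b c hab hbc ⟨haS, -⟩ ⟨hcS, hcG⟩
      by_cases hbS : b ∈ S
      · exact ⟨hbS, fun hbG => hcG (hG b c hbG hbc)⟩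
      · exact (hcG ⟨a, haS, b, hbS, hab, hbc⟩).elim
    have hrest : ¬ HasAlternation r (S ∩ G) k := by
      rintro ⟨a, c, haS, hcS, hac⟩
      obtain ⟨a₀, ha₀, c₀, hc₀, h₀, h₁⟩ := (haS 0).2
      refine h ⟨Fin.cons a₀ a, Fin.cons c₀ c, Fin.cases ha₀ fun i => (haS i).1,
        Fin.cases hc₀ fun i hci => hcS i ⟨hci, hG _ _ (haS i.castSucc).2 (hac i).1⟩,
        Fin.cases ⟨h₀, h₁⟩ fun i => ?_⟩
      simpa [← Fin.succ_castSucc] using hac i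
    simpa [Set.sdiff_union_inter, add_comm] using
      (UnionOfAtMostConvex.of_isRConvex hfirst).union (ih hrest)

theorem UnionOfAtMostConvex.compl (h : UnionOfAtMostConvex r k S) :
    UnionOfAtMostConvex r (k + 1) Sᶜ := by
  refine unionOfAtMostConvex_of_not_hasAlternation fun ⟨a, c, haS, hcS, hac⟩ => ?_
  refine h.not_hasAlternation ⟨c, fun i => a i.succ.castSucc, fun i => not_not.1 (hcS i),
    fun i => haS _, fun i => ⟨?_, (hac i.succ).1⟩⟩
  simpa only [Fin.succ_castSucc] using (hac i.castSucc).2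

end Alternation

section Laminar

variable {X : Type*}

def IsLaminar (ℬ : Set (Set X)) : Prop :=
  ∀ B ∈ ℬ, ∀ C ∈ ℬ, B ⊆ C ∨ C ⊆ B ∨ Disjoint B C

def frontRel (r : X → X → Prop) (B : Set X) (a b : X) : Prop :=
  (a ∈ B ∧ b ∉ B) ∨ ((a ∈ B ↔ b ∈ B) ∧ r a b)

variable {r : X → X → Prop} {B : Set X}

theorem IsRConvex.frontRel {C : Set X} (hC : IsRConvex r C) (hCB : C ⊆ B ∨ Disjoint C B) :
    IsRConvex (frontRel r B) C := by
  intro a b c hab hbc ha hc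
  have hac : a ∈ B ↔ c ∈ B := by
    rcases hCB with h | h
    · exact iff_of_true (h ha) (h hc)
    · exact iff_of_false (h.notMem_of_mem_left ha) (h.notMem_of_mem_left hc)
  refine hC a b c ?_ ?_ ha hc <;> unfold _root_.frontRel at hab hbc <;> tauto

theorem isRConvex_frontRel_self : IsRConvex (frontRel r B) B := by
  intro a b c _ hbc _ hc
  unfold frontRel at hbc
  tauto

variable [IsStrictTotalOrder X r]

instance : IsStrictTotalOrder X (frontRel r B) where
  trichotomous a b hab hba := by
    by_cases ha : a ∈ B <;> by_cases hb : b ∈ B <;>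
      simp_all [frontRel] <;> exact Std.Trichotomous.trichotomous a b hab hba
  irrefl a h := by
    rcases h with ⟨h, h'⟩ | ⟨-, h⟩
    exacts [h' h, irrefl_of r a h]
  trans a b c hab hbc := by
    unfold frontRel at *
    have := trans_of r (a := a) (b := b) (c := c)
    tauto

theorem IsLaminar.exists_isStrictTotalOrder {ℬ : Set (Set X)} (hfin : ℬ.Finite)
    (h : IsLaminar ℬ) : ∃ r : X → X → Prop, IsStrictTotalOrder X r ∧ ∀ B ∈ ℬ, IsRConvex r B := by
  lift ℬ to Finset (Set X) using hfin
  induction ℬ using Finset.strongInduction with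
  | H ℬ ih =>
    rcases ℬ.eq_empty_or_nonempty with rfl | hne
    · exact ⟨WellOrderingRel, inferInstance, by simp⟩
    -- Put a maximal member `B` first; every other member lies inside `B` or outside it.
    obtain ⟨B, hB⟩ := ℬ.exists_maximal hne
    obtain ⟨r, _, hr⟩ := ih (ℬ.erase B) (Finset.erase_ssubset hB.prop)
      fun C hC D hD => h C (Finset.mem_of_mem_erase hC) D (Finset.mem_of_mem_erase hD)
    refine ⟨frontRel r B, inferInstance, fun C hC => ?_⟩
    rcases eq_or_ne C B with rfl | hCB
    · exact isRConvex_frontRel_self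
    refine (hr C (Finset.mem_erase.2 ⟨hCB, hC⟩)).frontRel ?_
    rcases h C hC B hB.prop with hsub | hsup | hdisj
    exacts [Or.inl hsub, Or.inl (hB.2 hC hsup), Or.inr hdisj]

end Laminar

section IndepDim

variable {X : Type*}

def IsIndependentPair (A B : Set X) : Prop :=
  (A ∩ B).Nonempty ∧ (A \ B).Nonempty ∧ (B \ A).Nonempty ∧ (A ∪ B)ᶜ.Nonempty

theorem IsIndependentPair.symm {A B : Set X} (h : IsIndependentPair A B) :
    IsIndependentPair B A := by
  obtain ⟨h₁, h₂, h₃, h₄⟩ := h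
  exact ⟨Set.inter_comm A B ▸ h₁, h₃, h₂, Set.union_comm A B ▸ h₄⟩

theorem isIndependentPair_compl_left {A B : Set X} :
    IsIndependentPair Aᶜ B ↔ IsIndependentPair A B := by
  simp only [IsIndependentPair, Set.sdiff_eq, Set.compl_union, _root_.compl_compl, Set.inter_comm]
  tauto

theorem isIndependentPair_compl_right {A B : Set X} :
    IsIndependentPair A Bᶜ ↔ IsIndependentPair A B :=
  ⟨fun h => (isIndependentPair_compl_left.1 h.symm).symm,
    fun h => (isIndependentPair_compl_left.2 h.symm).symm⟩

theorem not_isIndependentPair_of_indepDimLEOne {𝒜 : Set (Set X)} (h : IndepDimLEOne 𝒜)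
    {A B : Set X} (hA : A ∈ 𝒜) (hB : B ∈ 𝒜) : ¬ IsIndependentPair A B := by
  rintro ⟨h₁, h₂, h₃, h₄⟩
  rcases h A hA B hB with h | h | h | h
  exacts [h₁.ne_empty h, h₂.ne_empty h, h₃.ne_empty h, h₄.ne_empty h]

theorem subset_or_subset_or_disjoint_of_not_isIndependentPair {A B : Set X}
    (h : ¬ IsIndependentPair A B) {p : X} (hA : p ∉ A) (hB : p ∉ B) :
    A ⊆ B ∨ B ⊆ A ∨ Disjoint A B := by
  simp only [IsIndependentPair, not_and_or, Set.not_nonempty_iff_eq_empty, Set.sdiff_eq_empty,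
    ← Set.disjoint_iff_inter_eq_empty] at h
  rcases h with h | h | h | h
  exacts [Or.inr (Or.inr h), Or.inl h, Or.inr (Or.inl h),
    (Set.eq_empty_iff_forall_notMem.1 h p (by simp [hA, hB])).elim]

theorem exists_isStrictTotalOrder_isRConvex_inter_or_diff [Nonempty X] {𝒜 : Set (Set X)}
    (h𝒜 : IndepDimLEOne 𝒜) (s : Set X) (hs : s.Finite) :
    ∃ r : X → X → Prop, IsStrictTotalOrder X r ∧
      ∀ A ∈ 𝒜, IsRConvex r (s ∩ A) ∨ IsRConvex r (s \ A) := by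
  classical
  obtain ⟨p⟩ := ‹Nonempty X›
  let flip (A : Set X) : Set X := if p ∈ A then Aᶜ else A
  have hflip (A : Set X) : p ∉ flip A := by by_cases hA : p ∈ A <;> simp [flip, hA]
  have hflip_indep (A B : Set X) : IsIndependentPair (flip A) (flip B) ↔ IsIndependentPair A B := by
    by_cases hA : p ∈ A <;> by_cases hB : p ∈ B <;>
      simp [flip, hA, hB, isIndependentPair_compl_left, isIndependentPair_compl_right]
  have hlam : IsLaminar ((fun A => s ∩ flip A) '' 𝒜) := by
    rintro _ ⟨A, hA, rfl⟩ _ ⟨B, hB, rfl⟩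
    rcases subset_or_subset_or_disjoint_of_not_isIndependentPair
      (mt (hflip_indep A B).1 (not_isIndependentPair_of_indepDimLEOne h𝒜 hA hB))
      (hflip A) (hflip B) with h | h | h
    exacts [Or.inl (Set.inter_subset_inter_right s h), Or.inr (Or.inl
      (Set.inter_subset_inter_right s h)), Or.inr (Or.inr (h.mono Set.inter_subset_right
        Set.inter_subset_right))]
  have hfin : ((fun A => s ∩ flip A) '' 𝒜).Finite :=
    hs.finite_subsets.subset (by rintro _ ⟨A, -, rfl⟩; exact Set.inter_subset_left)
  obtain ⟨r, hr, hconv⟩ := hlam.exists_isStrictTotalOrder hfin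
  refine ⟨r, hr, fun A hA => ?_⟩
  have := hconv _ ⟨A, hA, rfl⟩
  by_cases hpA : p ∈ A
  · exact Or.inr (by simpa [flip, hpA, Set.sdiff_eq] using this)
  · exact Or.inl (by simpa [flip, hpA] using this)

theorem unionOfAtMostConvex_two_preimage_val {r : X → X → Prop} [IsStrictTotalOrder X r]
    {s A : Set X} (h : IsRConvex r (s ∩ A) ∨ IsRConvex r (s \ A)) :
    UnionOfAtMostConvex (Subrel r (· ∈ s)) 2 (Subtype.val ⁻¹' A) := by
  have hval : ∀ a b, Subrel r (· ∈ s) a b → r a b := fun _ _ => id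
  rcases h with h | h
  · have := (h.preimage hval)
    simp only [Set.preimage_inter, Subtype.coe_preimage_self, Set.univ_inter] at this
    exact (UnionOfAtMostConvex.of_isRConvex this).mono one_le_two
  · have := (h.preimage hval)
    simp only [Set.preimage_sdiff, Subtype.coe_preimage_self, ← Set.compl_eq_univ_sdiff] at this
    simpa using (UnionOfAtMostConvex.of_isRConvex this).compl

end IndepDim

section Ultralimit

variable {X ι : Type*}

theorem exists_ultrafilter_finset_eventually_mem (α : Type*) :
    ∃ U : Ultrafilter (Finset α), ∀ x, ∀ᶠ s in (U : Filter (Finset α)), x ∈ s :=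
  ⟨.of .atTop, fun x => Ultrafilter.of_le .atTop
    ((Filter.eventually_ge_atTop {x}).mono fun _ hs => hs (Finset.mem_singleton_self x))⟩

def ultralimitRel (U : Ultrafilter ι) (R : ι → X → X → Prop) (a b : X) : Prop :=
  ∀ᶠ i in (U : Filter ι), R i a b

variable (U : Ultrafilter ι) {R : ι → X → X → Prop}

theorem isStrictTotalOrder_ultralimitRel (hR : ∀ i, IsStrictTotalOrder X (R i)) :
    IsStrictTotalOrder X (ultralimitRel U R) where
  trichotomous a b hab hba := by
    have : ∀ᶠ i in (U : Filter ι), R i a b ∨ a = b ∨ R i b a :=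
      .of_forall fun i => trichotomous_of (R i) a b
    simp only [Ultrafilter.eventually_or, Filter.eventually_const] at this
    tauto
  irrefl a h := by
    obtain ⟨i, hi⟩ := h.exists
    exact irrefl_of (R i) a hi
  trans a b c hab hbc := (hab.and hbc).mono fun i h => trans_of (R i) h.1 h.2

theorem unionOfAtMostConvex_ultralimitRel (hR : ∀ i, IsStrictTotalOrder X (R i))
    {s : ι → Set X} (hs : ∀ x, ∀ᶠ i in (U : Filter ι), x ∈ s i) {S : Set X} {k : ℕ}
    (h : ∀ᶠ i in (U : Filter ι),
      UnionOfAtMostConvex (Subrel (R i) (· ∈ s i)) k (Subtype.val ⁻¹' S)) :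
    UnionOfAtMostConvex (ultralimitRel U R) k S := by
  have := isStrictTotalOrder_ultralimitRel U hR
  refine unionOfAtMostConvex_of_not_hasAlternation fun ⟨a, c, haS, hcS, hac⟩ => ?_
  have hev : ∀ᶠ i in (U : Filter ι), (∀ j, a j ∈ s i) ∧ (∀ j, c j ∈ s i) ∧
      ∀ j, R i (a j.castSucc) (c j) ∧ R i (c j) (a j.succ) := by
    simp only [Filter.eventually_and, Filter.eventually_all]
    exact ⟨fun j => hs _, fun j => hs _, fun j => hac j⟩
  obtain ⟨i, ⟨has, hcs, hac⟩, hi⟩ := (hev.and h).exists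
  exact hi.not_hasAlternation ⟨fun j => ⟨a j, has j⟩, fun j => ⟨c j, hcs j⟩, haS, hcS, hac⟩

end Ultralimit

section Realize

variable {L : Language} {M : Type*} [L.Structure M]

theorem realizeSet_not {m : ℕ} (φ : L.Formula (Unit ⊕ Fin m)) (d : Fin m → M) :
    realizeSet L M φ.not d = (realizeSet L M φ d)ᶜ := by
  ext; simp [realizeSet]

theorem realizeSet_sup {m : ℕ} (φ ψ : L.Formula (Unit ⊕ Fin m)) (d : Fin m → M) :
    realizeSet L M (φ ⊔ ψ) d = realizeSet L M φ d ∪ realizeSet L M ψ d := by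
  ext; simp [realizeSet]

theorem realizeSet_inf {m : ℕ} (φ ψ : L.Formula (Unit ⊕ Fin m)) (d : Fin m → M) :
    realizeSet L M (φ ⊓ ψ) d = realizeSet L M φ d ∩ realizeSet L M ψ d := by
  ext; simp [realizeSet]

theorem realizeSet_relabel {m n : ℕ} (φ : L.Formula (Unit ⊕ Fin m)) (g : Fin m → Fin n)
    (d : Fin n → M) :
    realizeSet L M (φ.relabel (Sum.map id g)) d = realizeSet L M φ (d ∘ g) := by
  ext x
  simp only [realizeSet, Set.mem_ofPred_eq, Formula.realize_relabel]
  congr! 1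
  ext (_ | _) <;> rfl

/-- The formula `∃ z̄ ∀ x, ψ(x; ȳ) ↔ θ(x; z̄)`. -/
noncomputable def sameSetFormula {m n : ℕ} (ψ : L.Formula (Unit ⊕ Fin m))
    (θ : L.Formula (Unit ⊕ Fin n)) : L.Formula (Fin m) :=
  ((((ψ.relabel (Sum.map id Sum.inl)).iff (θ.relabel (Sum.map id Sum.inr))).relabel
    Sum.swap).iAlls Unit).iExs (Fin n)

theorem realize_sameSetFormula {m n : ℕ} (ψ : L.Formula (Unit ⊕ Fin m))
    (θ : L.Formula (Unit ⊕ Fin n)) (b : Fin m → M) :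
    (sameSetFormula ψ θ).Realize b ↔ ∃ d, realizeSet L M ψ b = realizeSet L M θ d := by
  simp only [sameSetFormula, Formula.realize_iExs, Formula.realize_iAlls,
    Formula.realize_relabel, Formula.realize_iff, Set.ext_iff, realizeSet, Set.mem_ofPred_eq]
  refine exists_congr fun d => ⟨fun h x => ?_, fun h x => ?_⟩
  · convert h fun _ => x using 2 <;> ext (_ | _) <;> rfl
  · convert h (x ()) using 2 <;> ext (_ | _) <;> rfl

end Realize

universe u v

/-- Each atom of a Boolean combination gets its own block of parameter variables. -/
inductive BoolComb {L : FirstOrder.Language.{u, v}} (Φ : Set ((m : ℕ) × L.Formula (Unit ⊕ Fin m))) :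
    Type (max u v)
  | atom (p : (m : ℕ) × L.Formula (Unit ⊕ Fin m)) : p ∈ Φ → BoolComb Φ
  | compl : BoolComb Φ → BoolComb Φ
  | union : BoolComb Φ → BoolComb Φ → BoolComb Φ
  | inter : BoolComb Φ → BoolComb Φ → BoolComb Φ

namespace BoolComb

variable {L : FirstOrder.Language.{u, v}} {Φ : Set ((m : ℕ) × L.Formula (Unit ⊕ Fin m))}

def arity : BoolComb Φ → ℕ
  | atom p _ => p.1
  | compl t => t.arity
  | union t₁ t₂ => t₁.arity + t₂.arity
  | inter t₁ t₂ => t₁.arity + t₂.arity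

noncomputable def toFormula : (t : BoolComb Φ) → L.Formula (Unit ⊕ Fin t.arity)
  | atom p _ => p.2
  | compl t => t.toFormula.not
  | union t₁ t₂ => t₁.toFormula.relabel (Sum.map id (Fin.castAdd t₂.arity)) ⊔
      t₂.toFormula.relabel (Sum.map id (Fin.natAdd t₁.arity))
  | inter t₁ t₂ => t₁.toFormula.relabel (Sum.map id (Fin.castAdd t₂.arity)) ⊓
      t₂.toFormula.relabel (Sum.map id (Fin.natAdd t₁.arity))

def convexBound : BoolComb Φ → ℕ
  | atom _ _ => 2
  | compl t => t.convexBound + 1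
  | union t₁ t₂ => t₁.convexBound + t₂.convexBound
  | inter t₁ t₂ => t₁.convexBound * t₂.convexBound

variable {M : Type*} [L.Structure M]

theorem realizeSet_compl (t : BoolComb Φ) (d : Fin t.compl.arity → M) :
    realizeSet L M t.compl.toFormula d = (realizeSet L M t.toFormula d)ᶜ :=
  realizeSet_not _ _

theorem realizeSet_union (t₁ t₂ : BoolComb Φ) (d : Fin (t₁.union t₂).arity → M) :
    realizeSet L M (t₁.union t₂).toFormula d = realizeSet L M t₁.toFormula (d ∘ Fin.castAdd _) ∪
      realizeSet L M t₂.toFormula (d ∘ Fin.natAdd _) :=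
  (realizeSet_sup _ _ _).trans (congrArg₂ (· ∪ ·) (realizeSet_relabel _ _ _)
    (realizeSet_relabel _ _ _))

theorem realizeSet_inter (t₁ t₂ : BoolComb Φ) (d : Fin (t₁.inter t₂).arity → M) :
    realizeSet L M (t₁.inter t₂).toFormula d = realizeSet L M t₁.toFormula (d ∘ Fin.castAdd _) ∩
      realizeSet L M t₂.toFormula (d ∘ Fin.natAdd _) :=
  (realizeSet_inf _ _ _).trans (congrArg₂ (· ∩ ·) (realizeSet_relabel _ _ _)
    (realizeSet_relabel _ _ _))

theorem exists_realizeSet_eq {S : Set M}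
    (h : GenBoolAlg {S | ∃ p ∈ Φ, ∃ c : Fin p.1 → M, S = realizeSet L M p.2 c} S) :
    ∃ (t : BoolComb Φ) (d : Fin t.arity → M), S = realizeSet L M t.toFormula d := by
  induction h with
  | base hA =>
    obtain ⟨p, hp, c, rfl⟩ := hA
    exact ⟨atom p hp, c, rfl⟩
  | compl _ ih =>
    obtain ⟨t, d, rfl⟩ := ih
    exact ⟨t.compl, d, (realizeSet_compl t d).symm⟩
  | union _ _ ih₁ ih₂ =>
    obtain ⟨t₁, d₁, rfl⟩ := ih₁
    obtain ⟨t₂, d₂, rfl⟩ := ih₂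
    refine ⟨t₁.union t₂, Fin.append d₁ d₂, ((realizeSet_union t₁ t₂ _).trans ?_).symm⟩
    exact congrArg₂ _ (congrArg _ (funext (Fin.append_left d₁ d₂)))
      (congrArg _ (funext (Fin.append_right d₁ d₂)))
  | inter _ _ ih₁ ih₂ =>
    obtain ⟨t₁, d₁, rfl⟩ := ih₁
    obtain ⟨t₂, d₂, rfl⟩ := ih₂
    refine ⟨t₁.inter t₂, Fin.append d₁ d₂, ((realizeSet_inter t₁ t₂ _).trans ?_).symm⟩
    exact congrArg₂ _ (congrArg _ (funext (Fin.append_left d₁ d₂)))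
      (congrArg _ (funext (Fin.append_right d₁ d₂)))

theorem unionOfAtMostConvex_preimage {Y : Type*} {r : Y → Y → Prop} [IsStrictTotalOrder Y r]
    (f : Y → M) (hΦ : ∀ p ∈ Φ, ∀ c, UnionOfAtMostConvex r 2 (f ⁻¹' realizeSet L M p.2 c))
    (t : BoolComb Φ) (d : Fin t.arity → M) :
    UnionOfAtMostConvex r t.convexBound (f ⁻¹' realizeSet L M t.toFormula d) := by
  induction t with
  | atom p hp => exact hΦ p hp d
  | compl t ih =>
    rw [realizeSet_compl, Set.preimage_compl]
    exact (ih d).compl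
  | union t₁ t₂ ih₁ ih₂ =>
    rw [realizeSet_union, Set.preimage_union]
    exact (ih₁ _).union (ih₂ _)
  | inter t₁ t₂ ih₁ ih₂ =>
    rw [realizeSet_inter, Set.preimage_inter]
    exact (ih₁ _).inter (ih₂ _)

end BoolComb

universe w

theorem exists_finset_cover_of_forall_model {L : Language} (T : L.Theory) {M : Type w}
    [Nonempty M] [L.Structure M] (hM : M ⊨ T) {ι : Type*} {m : ℕ} (χ : ι → L.Formula (Fin m))
    (h : ∀ (N : Type w) [Nonempty N] [L.Structure N], N ⊨ T →
      ∀ b : Fin m → N, ∃ i, (χ i).Realize b) :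
    ∃ F : Finset ι, ∀ b : Fin m → M, ∃ i ∈ F, (χ i).Realize b := by
  classical
  by_contra! hno
  let D (i : ι) : Set (Fin m → M) := {b | (χ i).Realize b}
  -- Index by finite sets of the sets `D i`, not of the `i`, to keep the ultrapower in `Type w`.
  choose b hb using fun G : Finset (Set.range D) => hno (G.image (Set.rangeSplitting D))
  obtain ⟨U, hU⟩ := exists_ultrafilter_finset_eventually_mem (Set.range D)
  let N := (U : Filter (Finset (Set.range D))).Product fun _ => M
  have hN : N ⊨ T :=
    (Theory.model_iff T).2 fun φ hφ => (Ultraproduct.sentence_realize φ).2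
      (.of_forall fun _ => (Theory.model_iff T).1 hM φ hφ)
  obtain ⟨i, hi⟩ := h N hN fun j => ((fun G => b G j : Finset (Set.range D) → M) : N)
  obtain ⟨G, hGi, hmem⟩ :=
    (((Ultraproduct.realize_formula_cast (χ i) _).1 hi).and (hU ⟨D i, Set.mem_range_self i⟩)).exists
  refine hb G _ (Finset.mem_image_of_mem _ hmem) ?_
  change b G ∈ D _
  rwa [Set.apply_rangeSplitting D]

theorem stmt_6_general {L : Language} (T : L.Theory)
    (Φ : Set ((m : ℕ) × L.Formula (Unit ⊕ Fin m)))
    (ha : ∀ (M : Type w) [Nonempty M] [L.Structure M], M ⊨ T →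
      IndepDimLEOne {S : Set M | ∃ p ∈ Φ, ∃ b : Fin p.1 → M, S = realizeSet L M p.2 b})
    (hb : ∀ (M : Type w) [Nonempty M] [L.Structure M], M ⊨ T →
      ∀ (m : ℕ) (ψ : L.Formula (Unit ⊕ Fin m)) (b : Fin m → M),
        GenBoolAlg {S : Set M | ∃ p ∈ Φ, ∃ c : Fin p.1 → M, S = realizeSet L M p.2 c}
          (realizeSet L M ψ b)) :
    ∀ (M : Type w) [Nonempty M] [L.Structure M], M ⊨ T → ConvexlyOrderable L M := by
  intro M _ _ hM
  obtain ⟨U, hU⟩ := exists_ultrafilter_finset_eventually_mem M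
  choose R hR hRconv using fun s : Finset M =>
    exists_isStrictTotalOrder_isRConvex_inter_or_diff (ha M hM) (s : Set M) s.finite_toSet
  refine ⟨ultralimitRel U R, isStrictTotalOrder_ultralimitRel U hR, fun m ψ => ?_⟩
  obtain ⟨F, hF⟩ := exists_finset_cover_of_forall_model T hM
    (fun t : BoolComb Φ => sameSetFormula ψ t.toFormula) fun N _ _ hN b =>
      (BoolComb.exists_realizeSet_eq (hb N hN m ψ b)).imp fun t => (realize_sameSetFormula _ _ b).2
  refine ⟨F.sup BoolComb.convexBound, fun b => ?_⟩
  obtain ⟨t, ht, hψ⟩ := hF b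
  obtain ⟨d, hψ⟩ := (realize_sameSetFormula _ _ b).1 hψ
  rw [hψ]
  refine unionOfAtMostConvex_ultralimitRel U hR (s := fun s : Finset M => ↑s) hU
    (.of_forall fun s => ?_)
  have := hR s
  refine (BoolComb.unionOfAtMostConvex_preimage Subtype.val (fun p hp c => ?_) t d).mono
    (F.le_sup ht)
  exact unionOfAtMostConvex_two_preimage_val (hRconv s _ ⟨p, hp, c, rfl⟩)

theorem stmt_6 {L : Language} (T : L.Theory) (hcomp : T.IsComplete)
    (hsat : T.IsSatisfiable)
    (Φ : Set ((m : ℕ) × L.Formula (Unit ⊕ Fin m)))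
    (ha : ∀ (M : Type w) [Nonempty M] [L.Structure M], M ⊨ T →
      IndepDimLEOne {S : Set M | ∃ p ∈ Φ, ∃ b : Fin p.1 → M, S = realizeSet L M p.2 b})
    (hb : ∀ (M : Type w) [Nonempty M] [L.Structure M], M ⊨ T →
      ∀ (m : ℕ) (ψ : L.Formula (Unit ⊕ Fin m)) (b : Fin m → M),
        GenBoolAlg {S : Set M | ∃ p ∈ Φ, ∃ c : Fin p.1 → M, S = realizeSet L M p.2 c}
          (realizeSet L M ψ b)) :
    ∀ (M : Type w) [Nonempty M] [L.Structure M], M ⊨ T → ConvexlyOrderable L M :=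
  stmt_6_general T Φ ha hb
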